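/- Let x·y be a commutative post-Lie algebra structure on a Lie algebra 𝔤. Then 𝔤·[𝔤,𝔤] = 0 (i.e., x·[y,z] = 0 for all x,y,z ∈ 𝔤) if and only if the product is associative, i.e., (x·y)·z = x·(y·z) for all x,y,z ∈ 𝔤. -/
import Mathlib

/-- A commutative post-Lie algebra structure (CPA-structure) on a Lie algebra `𝔤`:
a bilinear product `x·y` with `x·y = y·x`, `[x,y]·z = x·(y·z) − y·(x·z)` and
`x·[y,z] = [x·y, z] + [y, x·z]`. -/
def IsCPAStructure {K L : Type*} [Field K] [LieRing L] [LieAlgebra K L]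
    (mul : L →ₗ[K] L →ₗ[K] L) : Prop :=
  (∀ x y : L, mul x y = mul y x) ∧
  (∀ x y z : L, mul ⁅x, y⁆ z = mul x (mul y z) - mul y (mul x z)) ∧
  (∀ x y z : L, mul x ⁅y, z⁆ = ⁅mul x y, z⁆ + ⁅y, mul x z⁆)

/-- For a commutative post-Lie algebra structure `x·y` on a Lie algebra `𝔤`, we have
`𝔤·[𝔤,𝔤] = 0` if and only if the product is associative. -/
theorem cpa_annihilates_derived_iff_associative
    (K : Type*) (L : Type*) [Field K]
    [LieRing L] [LieAlgebra K L]
    (mul : L →ₗ[K] L →ₗ[K] L) (h : IsCPAStructure mul) :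
    (∀ x y z : L, mul x ⁅y, z⁆ = 0) ↔
    (∀ x y z : L, mul (mul x y) z = mul x (mul y z)) := by
  obtain ⟨hc, h2, h3⟩ := h
  constructor
  · intro h0 x y z
    have key : ∀ a b c : L, mul a (mul b c) = mul b (mul a c) := by
      intro a b c
      have : mul ⁅a, b⁆ c = 0 := by rw [hc]; exact h0 c a b
      have := h2 a b c
      rw [‹mul ⁅a, b⁆ c = 0›] at this
      exact sub_eq_zero.mp this.symm
    calc mul (mul x y) z = mul z (mul x y) := hc _ _
      _ = mul x (mul z y) := key z x y
      _ = mul x (mul y z) := by rw [hc z y]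
  · intro ha x y z
    rw [hc]
    have : mul ⁅y, z⁆ x = mul y (mul z x) - mul z (mul y x) := h2 y z x
    rw [← ha, ← ha, hc y z] at this
    simpa using this
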